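/- arXiv:1903.04048 — 2 statements merged into one kernel-verified Lean document; each statement's English description precedes it below -/
import Mathlib

section
/- For every x ∈ ℝ³, the determinant of the 3×3 matrix with columns F₁(x), F₀₁(x), F₀₀₁(x) equals c₃c₅²c₇³, which is nonzero; consequently F₁(x), F₀₁(x), F₀₀₁(x) are linearly independent and span ℝ³, so the Lie algebra generated by {F₀,F₁} at any point x equals the whole tangent space T_xℝ³. -/
/-!
Since `F₁` is constant, `[F₀, G] = -F₀' G` for every constant field `G`; hence `F₀₁ = -F₀' F₁` is
again constant and `F₀₀₁ = F₀'(F₀' F₁)`. Both `F₁` and `F₀₁` have vanishing second coordinate, so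
expanding the determinant along the second row leaves the constant `(F₀₀₁)₂ = c₃c₅c₇` times the
minor `-c₅c₇²` with sign `-1`; the `x`-dependent entry of `F₀₀₁` drops out. A nonzero determinant
makes the three columns a basis.
-/

noncomputable section

/-- Lie bracket of vector fields on ℝ³: `[F,G](x) = G'(x)F(x) − F'(x)G(x)`. -/
def lieBracket (F G : (Fin 3 → ℝ) → (Fin 3 → ℝ)) (x : Fin 3 → ℝ) : Fin 3 → ℝ :=
  fderiv ℝ G x (F x) - fderiv ℝ F x (G x)

/-- Drift vector field of the electric vehicle. -/
def F0 (c1 c2 c3 c4 c5 c6 : ℝ) (x : Fin 3 → ℝ) : Fin 3 → ℝ :=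
  ![c1 * x 0 + c2 * x 2, c3 * x 2, c4 + c5 * x 0 + c6 * (x 2) ^ 2]

/-- Control vector field of the electric vehicle. -/
def F1 (c7 : ℝ) (_x : Fin 3 → ℝ) : Fin 3 → ℝ := ![c7, 0, 0]

theorem linearIndependent_and_span_eq_top_of_det_ne_zero {K ι : Type*} [Field K] [Fintype ι]
    [DecidableEq ι] (v : ι → ι → K) (h : (Matrix.of fun i j => v j i).det ≠ 0) :
    LinearIndependent K v ∧ Submodule.span K (Set.range v) = ⊤ := by
  rw [(Pi.basisFun K ι).is_basis_iff_det, Pi.basisFun_det_apply, ← Matrix.det_transpose]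
  exact h.isUnit

theorem lieBracket_const_right (F : (Fin 3 → ℝ) → (Fin 3 → ℝ)) (v x : Fin 3 → ℝ) :
    lieBracket F (fun _ => v) x = -fderiv ℝ F x v := by
  simp [lieBracket]

theorem fderiv_F0_apply (c1 c2 c3 c4 c5 c6 : ℝ) (x v : Fin 3 → ℝ) :
    fderiv ℝ (F0 c1 c2 c3 c4 c5 c6) x v =
      ![c1 * v 0 + c2 * v 2, c3 * v 2, c5 * v 0 + 2 * c6 * x 2 * v 2] := by
  have d0 : HasFDerivAt (fun y : Fin 3 → ℝ => y 0) (ContinuousLinearMap.proj (R := ℝ) 0) x :=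
    hasFDerivAt_apply 0 x
  have d2 : HasFDerivAt (fun y : Fin 3 → ℝ => y 2) (ContinuousLinearMap.proj (R := ℝ) 2) x :=
    hasFDerivAt_apply 2 x
  rw [fderiv_pi fun i => by fin_cases i <;>
    simp only [F0, Fin.zero_eta, Fin.mk_one, Fin.reduceFinMk, Matrix.cons_val_zero,
      Matrix.cons_val_one, Matrix.cons_val] <;> fun_prop]
  ext i
  fin_cases i
  · simp [F0, ((d0.const_mul c1).fun_add (d2.const_mul c2)).fderiv]
  · simp [F0, (d2.const_mul c3).fderiv]
  · simp only [F0, Fin.reduceFinMk, ContinuousLinearMap.coe_pi', Matrix.cons_val,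
      (((d0.const_mul c5).const_add c4).fun_add ((d2.pow 2).const_mul c6)).fderiv,
      add_apply, smul_apply, ContinuousLinearMap.proj_apply, smul_eq_mul, nsmul_eq_mul]
    ring

theorem lieBracket_F0_F1 (c1 c2 c3 c4 c5 c6 c7 : ℝ) :
    lieBracket (F0 c1 c2 c3 c4 c5 c6) (F1 c7) = fun _ => ![-(c1 * c7), 0, -(c5 * c7)] := by
  funext x
  rw [show F1 c7 = fun _ => ![c7, 0, 0] from rfl, lieBracket_const_right, fderiv_F0_apply]
  ext i
  fin_cases i <;> simp

theorem lieBracket_F0_lieBracket_F0_F1 (c1 c2 c3 c4 c5 c6 c7 : ℝ) (x : Fin 3 → ℝ) :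
    lieBracket (F0 c1 c2 c3 c4 c5 c6) (lieBracket (F0 c1 c2 c3 c4 c5 c6) (F1 c7)) x =
      ![c7 * (c1 ^ 2 + c2 * c5), c3 * c5 * c7, c5 * c7 * (c1 + 2 * c6 * x 2)] := by
  rw [lieBracket_F0_F1, lieBracket_const_right, fderiv_F0_apply]
  ext i
  fin_cases i <;>
    simp only [Fin.zero_eta, Fin.mk_one, Fin.reduceFinMk, Matrix.cons_val_zero,
      Matrix.cons_val_one, Matrix.cons_val, Pi.neg_apply] <;> ring

theorem det_F1_F01_F001 (c1 c2 c3 c4 c5 c6 c7 : ℝ) (x : Fin 3 → ℝ) :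
    (Matrix.of fun i j =>
        (![F1 c7 x,
           lieBracket (F0 c1 c2 c3 c4 c5 c6) (F1 c7) x,
           lieBracket (F0 c1 c2 c3 c4 c5 c6) (lieBracket (F0 c1 c2 c3 c4 c5 c6) (F1 c7)) x]
          : Fin 3 → Fin 3 → ℝ) j i).det = c3 * c5 ^ 2 * c7 ^ 3 := by
  rw [Matrix.det_fin_three, lieBracket_F0_lieBracket_F0_F1, lieBracket_F0_F1]
  simp only [F1, Matrix.of_apply, Matrix.cons_val', Matrix.cons_val_fin_one, Matrix.cons_val_zero,
    Matrix.cons_val_one, Matrix.cons_val]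
  ring

theorem stmt1_general (c1 c2 c3 c4 c5 c6 c7 : ℝ)
    (h3 : 0 < c3) (h5 : 0 < c5) (h7 : 0 < c7) (x : Fin 3 → ℝ) :
    (Matrix.of fun i j =>
        (![F1 c7 x,
           lieBracket (F0 c1 c2 c3 c4 c5 c6) (F1 c7) x,
           lieBracket (F0 c1 c2 c3 c4 c5 c6) (lieBracket (F0 c1 c2 c3 c4 c5 c6) (F1 c7)) x]
          : Fin 3 → Fin 3 → ℝ) j i).det = c3 * c5 ^ 2 * c7 ^ 3 ∧
    c3 * c5 ^ 2 * c7 ^ 3 ≠ 0 ∧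
    LinearIndependent ℝ
      ![F1 c7 x,
        lieBracket (F0 c1 c2 c3 c4 c5 c6) (F1 c7) x,
        lieBracket (F0 c1 c2 c3 c4 c5 c6) (lieBracket (F0 c1 c2 c3 c4 c5 c6) (F1 c7)) x] ∧
    Submodule.span ℝ
      (Set.range
        ![F1 c7 x,
          lieBracket (F0 c1 c2 c3 c4 c5 c6) (F1 c7) x,
          lieBracket (F0 c1 c2 c3 c4 c5 c6) (lieBracket (F0 c1 c2 c3 c4 c5 c6) (F1 c7)) x]) = ⊤ := by
  have hdet := det_F1_F01_F001 c1 c2 c3 c4 c5 c6 c7 x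
  have hne : c3 * c5 ^ 2 * c7 ^ 3 ≠ 0 := by positivity
  exact ⟨hdet, hne, linearIndependent_and_span_eq_top_of_det_ne_zero _ (hdet ▸ hne)⟩

theorem stmt1 (c1 c2 c3 c4 c5 c6 c7 : ℝ)
    (h1 : c1 < 0) (h2 : c2 < 0) (h3 : 0 < c3) (h4 : c4 < 0)
    (h5 : 0 < c5) (h6 : c6 < 0) (h7 : 0 < c7) (x : Fin 3 → ℝ) :
    (Matrix.of fun i j =>
        (![F1 c7 x,
           lieBracket (F0 c1 c2 c3 c4 c5 c6) (F1 c7) x,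
           lieBracket (F0 c1 c2 c3 c4 c5 c6) (lieBracket (F0 c1 c2 c3 c4 c5 c6) (F1 c7)) x]
          : Fin 3 → Fin 3 → ℝ) j i).det = c3 * c5 ^ 2 * c7 ^ 3 ∧
    c3 * c5 ^ 2 * c7 ^ 3 ≠ 0 ∧
    LinearIndependent ℝ
      ![F1 c7 x,
        lieBracket (F0 c1 c2 c3 c4 c5 c6) (F1 c7) x,
        lieBracket (F0 c1 c2 c3 c4 c5 c6) (lieBracket (F0 c1 c2 c3 c4 c5 c6) (F1 c7)) x] ∧
    Submodule.span ℝ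
      (Set.range
        ![F1 c7 x,
          lieBracket (F0 c1 c2 c3 c4 c5 c6) (F1 c7) x,
          lieBracket (F0 c1 c2 c3 c4 c5 c6) (lieBracket (F0 c1 c2 c3 c4 c5 c6) (F1 c7)) x]) = ⊤ :=
  stmt1_general c1 c2 c3 c4 c5 c6 c7 h3 h5 h7 x
end
end

section
/- Along an order-1 boundary arc, vanishing of H₀₁ can occur only at the endpoints: let z(·) = (x(·),p(·)) solve the Hamiltonian system of H_{c₁} on [t₁,t₂] with g₁(x(t)) = 0, H₁(z(t)) = 0 and H₀₁(z(t)) ≤ 0 for all t ∈ [t₁,t₂] (the multiplier η_{c₁} = H₀₁/c₇ is nonpositive), and with p(t) ≠ 0 for all t. If τ ∈ [t₁,t₂] satisfies H₀₁(z(τ)) = 0, then τ = t₁ or τ = t₂. -/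
noncomputable section

/-- The Hamiltonian vector field `X_h = (∂h/∂p, −∂h/∂x)` of a function `h`
on `ℝ³ × ℝ³` (coordinates `(x, p)`). -/
def Xham (h : (Fin 3 → ℝ) × (Fin 3 → ℝ) → ℝ) (z : (Fin 3 → ℝ) × (Fin 3 → ℝ)) :
    (Fin 3 → ℝ) × (Fin 3 → ℝ) :=
  (fun i => fderiv ℝ h z ((0 : Fin 3 → ℝ), Pi.single i (1:ℝ)),
   fun i => -fderiv ℝ h z (Pi.single i (1:ℝ), (0 : Fin 3 → ℝ)))

/-- Hamiltonian lift `H₀(x,p) = ⟨p, F₀(x)⟩`. -/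
def H0 (c1 c2 c3 c4 c5 c6 : ℝ) (z : (Fin 3 → ℝ) × (Fin 3 → ℝ)) : ℝ :=
  ∑ i, z.2 i * F0 c1 c2 c3 c4 c5 c6 z.1 i

/-- Hamiltonian lift `H₁(x,p) = ⟨p, F₁(x)⟩ = c₇ p₁`. -/
def H1 (c7 : ℝ) (z : (Fin 3 → ℝ) × (Fin 3 → ℝ)) : ℝ := c7 * z.2 0

/-- `H₀₁(x,p) = ⟨p, [F₀,F₁](x)⟩ = −c₇(c₁p₁ + c₅p₃)`. -/
def H01 (c1 c5 c7 : ℝ) (z : (Fin 3 → ℝ) × (Fin 3 → ℝ)) : ℝ :=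
  -(c7 * (c1 * z.2 0 + c5 * z.2 2))

/-- Feedback boundary control of the order-1 constraint `g₁(x) = x₁ − 1`. -/
def uc1 (c1 c2 c7 : ℝ) (x : Fin 3 → ℝ) : ℝ := -(c1 + c2 * x 2) / c7

/-- Multiplier of the order-1 constraint. -/
def etac1 (c5 : ℝ) (z : (Fin 3 → ℝ) × (Fin 3 → ℝ)) : ℝ := -(c5 * z.2 2)

/-- True Hamiltonian of the order-1 boundary arc:
`H_{c₁} = H₀ + u_{c₁}H₁ + η_{c₁} g₁`. -/
def Hc1 (c1 c2 c3 c4 c5 c6 c7 : ℝ) (z : (Fin 3 → ℝ) × (Fin 3 → ℝ)) : ℝ :=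
  H0 c1 c2 c3 c4 c5 c6 z + uc1 c1 c2 c7 z.1 * H1 c7 z + etac1 c5 z * (z.1 0 - 1)

/-! On the arc, `H₁ = c₇p₁ = 0` forces `p₁ = 0`, so `H₀₁ = -c₇c₅p₃` and `H₀₁ ≤ 0` says `p₃ ≥ 0`.
If `H₀₁(z(τ)) = 0` at an interior `τ`, then `p₃` attains its minimum `0` at `τ`, so `ṗ₃(τ) = 0`.
The adjoint equation of `H_{c₁}` reads `ṗ₃ = -(c₃p₂ + 2c₆x₃p₃)`, hence `p₂(τ) = 0` as well and
`p(τ) = 0`, which is excluded. (Indices as in the paper; in Lean, `Fin 3` counts from `0`.) -/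

open Set Topology

lemma Hc1_eq {c1 c2 c3 c4 c5 c6 c7 : ℝ} (hc7 : c7 ≠ 0) :
    Hc1 c1 c2 c3 c4 c5 c6 c7 = fun w : (Fin 3 → ℝ) × (Fin 3 → ℝ) =>
      c1 * w.2 0 * (w.1 0 - 1) + c3 * w.2 1 * w.1 2 + w.2 2 * (c4 + c5 + c6 * w.1 2 ^ 2) := by
  funext w
  simp only [Hc1, H0, H1, uc1, etac1, F0, Fin.sum_univ_three, Matrix.cons_val_zero,
    Matrix.cons_val_one, Matrix.cons_val_two, Matrix.head_cons, Matrix.tail_cons]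
  field_simp
  ring

lemma Xham_Hc1_snd_two {c1 c2 c3 c4 c5 c6 c7 : ℝ} (hc7 : c7 ≠ 0)
    (w : (Fin 3 → ℝ) × (Fin 3 → ℝ)) :
    (Xham (Hc1 c1 c2 c3 c4 c5 c6 c7) w).2 2 = -(c3 * w.2 1 + 2 * c6 * w.1 2 * w.2 2) := by
  simp only [Xham]
  -- `∂H/∂x₃` is the derivative of `H` along the line through `w` in direction `(e₃, 0)`
  rw [← DifferentiableAt.lineDeriv_eq_fderiv (by rw [Hc1_eq hc7]; fun_prop)]
  congr 1
  apply HasLineDerivAt.lineDeriv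
  rw [Hc1_eq hc7]
  unfold HasLineDerivAt
  simp only [Fin.isValue, Prod.smul_mk, smul_zero, Prod.snd_add, Pi.add_apply, Pi.zero_apply,
    add_zero, Prod.fst_add, Pi.smul_apply, ne_eq, Fin.reduceEq, not_false_eq_true,
    Pi.single_eq_of_ne, smul_eq_mul, mul_zero, Pi.single_eq_same, mul_one]
  have hx : HasDerivAt (fun t : ℝ => w.1 2 + t) 1 0 := (hasDerivAt_id 0).const_add _
  convert ((hx.const_mul (c3 * w.2 1)).const_add (c1 * w.2 0 * (w.1 0 - 1))).add
    ((((hx.pow 2).const_mul c6).const_add (c4 + c5)).const_mul (w.2 2)) using 1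
  · ext t
    simp only [Pi.add_apply, Pi.pow_apply]
  · norm_num
    ring

lemma H1_eq_zero_iff {c7 : ℝ} (hc7 : c7 ≠ 0) {w : (Fin 3 → ℝ) × (Fin 3 → ℝ)} :
    H1 c7 w = 0 ↔ w.2 0 = 0 := by
  simp [H1, hc7]

lemma H01_eq_of_snd_zero_eq_zero {c1 c5 c7 : ℝ} {w : (Fin 3 → ℝ) × (Fin 3 → ℝ)}
    (hw : w.2 0 = 0) : H01 c1 c5 c7 w = -(c7 * c5 * w.2 2) := by
  simp only [H01, hw]
  ring

theorem HasDerivWithinAt.eq_zero_of_isMinOn_Icc {f : ℝ → ℝ} {f' a b τ : ℝ}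
    (hf : HasDerivWithinAt f f' (Icc a b) τ) (hmin : IsMinOn f (Icc a b) τ)
    (hτ : τ ∈ Ioo a b) : f' = 0 :=
  have hnhds : Icc a b ∈ 𝓝 τ := Icc_mem_nhds hτ.1 hτ.2
  (hmin.isLocalMin hnhds).hasDerivAt_eq_zero (hf.hasDerivAt hnhds)

theorem stmt19_general (c1 c2 c3 c4 c5 c6 c7 : ℝ)
    (h3 : 0 < c3)
    (h5 : 0 < c5) (h7 : 0 < c7)
    (t1 t2 : ℝ)
    (z : ℝ → (Fin 3 → ℝ) × (Fin 3 → ℝ))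
    (hz : ∀ t ∈ Set.Icc t1 t2,
      HasDerivWithinAt z (Xham (Hc1 c1 c2 c3 c4 c5 c6 c7) (z t)) (Set.Icc t1 t2) t)
    (hH1 : ∀ t ∈ Set.Icc t1 t2, H1 c7 (z t) = 0)
    (hH01 : ∀ t ∈ Set.Icc t1 t2, H01 c1 c5 c7 (z t) ≤ 0)
    (hp : ∀ t ∈ Set.Icc t1 t2, (z t).2 ≠ 0)
    (τ : ℝ) (hτ : τ ∈ Set.Icc t1 t2) (h0 : H01 c1 c5 c7 (z τ) = 0) :
    τ = t1 ∨ τ = t2 := by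
  by_contra! hne
  have hτ' : τ ∈ Ioo t1 t2 := ⟨hτ.1.lt_of_ne hne.1.symm, hτ.2.lt_of_ne hne.2⟩
  have hp0 : ∀ t ∈ Icc t1 t2, (z t).2 0 = 0 := fun t ht => (H1_eq_zero_iff h7.ne').mp (hH1 t ht)
  have hH01_eq : ∀ t ∈ Icc t1 t2, H01 c1 c5 c7 (z t) = -(c7 * c5 * (z t).2 2) :=
    fun t ht => H01_eq_of_snd_zero_eq_zero (hp0 t ht)
  have hp2 : (z τ).2 2 = 0 := by
    simpa [hH01_eq τ hτ, h7.ne', h5.ne'] using h0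
  have hp2_min : IsMinOn (fun t => (z t).2 2) (Icc t1 t2) τ := fun t ht => by
    have := hH01 t ht
    rw [hH01_eq t ht, neg_nonpos] at this
    show (z τ).2 2 ≤ (z t).2 2
    rw [hp2]
    exact (mul_nonneg_iff_of_pos_left (mul_pos h7 h5)).mp this
  have hp2_deriv : HasDerivWithinAt (fun t => (z t).2 2)
      ((Xham (Hc1 c1 c2 c3 c4 c5 c6 c7) (z τ)).2 2) (Icc t1 t2) τ :=
    hasDerivWithinAt_pi.mp
      ((ContinuousLinearMap.snd ℝ _ _).hasFDerivAt.comp_hasDerivWithinAt τ (hz τ hτ)) 2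
  have hp1 : (z τ).2 1 = 0 := by
    have := hp2_deriv.eq_zero_of_isMinOn_Icc hp2_min hτ'
    rw [Xham_Hc1_snd_two h7.ne', hp2] at this
    simpa [h3.ne'] using this
  refine hp τ hτ (funext fun i => ?_)
  fin_cases i
  exacts [hp0 τ hτ, hp1, hp2]

/-- Along an order-1 boundary arc (solution of the flow of `H_{c₁}` on
`[t₁,t₂]` with `g₁ = 0`, `H₁ = 0`, nonpositive multiplier `H₀₁ ≤ 0` and
nonvanishing adjoint vector), `H₀₁` can vanish only at the endpoints. -/
theorem stmt19 (c1 c2 c3 c4 c5 c6 c7 : ℝ)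
    (h1 : c1 < 0) (h2 : c2 < 0) (h3 : 0 < c3) (h4 : c4 < 0)
    (h5 : 0 < c5) (h6 : c6 < 0) (h7 : 0 < c7)
    (t1 t2 : ℝ)
    (z : ℝ → (Fin 3 → ℝ) × (Fin 3 → ℝ))
    (hz : ∀ t ∈ Set.Icc t1 t2,
      HasDerivWithinAt z (Xham (Hc1 c1 c2 c3 c4 c5 c6 c7) (z t)) (Set.Icc t1 t2) t)
    (hg : ∀ t ∈ Set.Icc t1 t2, (z t).1 0 - 1 = 0)
    (hH1 : ∀ t ∈ Set.Icc t1 t2, H1 c7 (z t) = 0)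
    (hH01 : ∀ t ∈ Set.Icc t1 t2, H01 c1 c5 c7 (z t) ≤ 0)
    (hp : ∀ t ∈ Set.Icc t1 t2, (z t).2 ≠ 0)
    (τ : ℝ) (hτ : τ ∈ Set.Icc t1 t2) (h0 : H01 c1 c5 c7 (z τ) = 0) :
    τ = t1 ∨ τ = t2 :=
  stmt19_general c1 c2 c3 c4 c5 c6 c7 h3 h5 h7 t1 t2 z hz hH1 hH01 hp τ hτ h0
end
end
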